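/- Let (Y, A, D) be an AD-Young diagram with Y having n rows and columns. If A is nonempty, then no valid transversal of (Y, A, D) avoids M(12); if D is nonempty, then no valid transversal avoids M(21). If Y contains the staircase (n, n-1, ..., 1) and A is empty, exactly one valid transversal avoids M(12); if Y contains the staircase and D is empty, exactly one valid transversal avoids M(21). -/

import Mathlib

/-!
Both uniqueness statements come from the staircase, which leaves row `i` at least `n - i` cells. A
transversal avoiding `M(12)` is strictly decreasing, hence the anti-diagonal. For `M(21)`, fill the
rows from the bottom up, each taking the rightmost cell whose column no lower row uses; the
staircase guarantees such a cell. A transversal avoiding `M(21)` makes the same choices: if in row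
`i` it took a column left of the greedy one, the greedy column would be used by a higher row, and
these two cells would form an `M(21)` whose corner, in row `i` and the greedy column, lies in the
diagram. In two equal consecutive rows, the upper row's greedy column is still free for the lower
row, so the greedy transversal ascends there.
-/

/-- A transversal of the Young diagram with row lengths `μ` inside an `n × n` square:
`t i` is the column of the unique element in row `i`. -/
def IsTransv {n : ℕ} (μ : Fin n → ℕ) (t : Fin n → Fin n) : Prop :=
  Function.Bijective t ∧ ∀ i, (t i).val < μ i

/-- The transversal `t` contains the matrix M(12). -/
def ContainsM12 {n : ℕ} (t : Fin n → Fin n) : Prop :=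
  ∃ i j : Fin n, i < j ∧ t i < t j

/-- The transversal `t` contains the matrix M(21) (the corner square must lie in the diagram). -/
def ContainsM21 {n : ℕ} (μ : Fin n → ℕ) (t : Fin n → Fin n) : Prop :=
  ∃ i j : Fin n, i < j ∧ t j < t i ∧ (t i).val < μ j

/-- A valid transversal of the AD-Young diagram (μ, A, D): a transversal whose ascent set
contains A and whose descent set contains D (gaps are 0-indexed: gap i is between rows i, i+1). -/
def ValidTransv {n : ℕ} (μ : Fin n → ℕ) (A D : Finset ℕ) (t : Fin n → Fin n) : Prop :=
  IsTransv μ t ∧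
  (∀ i ∈ A, ∀ h : i + 1 < n, t ⟨i, by omega⟩ < t ⟨i + 1, h⟩) ∧
  (∀ i ∈ D, ∀ h : i + 1 < n, t ⟨i + 1, h⟩ < t ⟨i, by omega⟩)

open Finset

section

variable {n : ℕ} {μ : Fin n → ℕ} {A D : Finset ℕ} {t : Fin n → Fin n}

theorem ValidTransv.containsM12 (ht : ValidTransv μ A D t) {a : ℕ} (ha : a ∈ A)
    (h : a + 1 < n) : ContainsM12 t :=
  ⟨⟨a, by omega⟩, ⟨a + 1, h⟩, Fin.mk_lt_mk.mpr a.lt_succ_self, ht.2.1 a ha h⟩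

theorem ValidTransv.containsM21 (ht : ValidTransv μ A D t) {d : ℕ} (hd : d ∈ D)
    (h : d + 1 < n) (hμ : μ ⟨d, by omega⟩ ≤ μ ⟨d + 1, h⟩) : ContainsM21 μ t :=
  ⟨⟨d, by omega⟩, ⟨d + 1, h⟩, Fin.mk_lt_mk.mpr d.lt_succ_self, ht.2.2 d hd h,
    (ht.1.2 _).trans_le hμ⟩

theorem strictAnti_of_not_containsM12 (ht : Function.Injective t) (h : ¬ ContainsM12 t) :
    StrictAnti t := fun i j hij =>
  lt_of_le_of_ne (not_lt.mp fun hlt => h ⟨i, j, hij, hlt⟩) (ht.ne hij.ne')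

theorem eq_rev_of_strictAnti (ht : StrictAnti t) : t = Fin.rev := by
  funext i
  simpa using congrFun (ht.comp Fin.rev_strictAnti).eq_id i.rev

theorem validTransv_rev (hstair : ∀ i : Fin n, n - i.val ≤ μ i) (D : Finset ℕ) :
    ValidTransv μ ∅ D Fin.rev := by
  refine ⟨⟨Fin.rev_bijective, fun i => ?_⟩, by simp, fun i _ h => ?_⟩
  · have := hstair i
    simp only [Fin.val_rev]
    omega
  · exact Fin.rev_lt_rev.mpr (Fin.mk_lt_mk.mpr i.lt_succ_self)

theorem existsUnique_validTransv_not_containsM12 (hstair : ∀ i : Fin n, n - i.val ≤ μ i)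
    (D : Finset ℕ) : ∃! t : Fin n → Fin n, ValidTransv μ ∅ D t ∧ ¬ ContainsM12 t :=
  ⟨Fin.rev,
    ⟨validTransv_rev hstair D, fun ⟨_, _, hij, hlt⟩ => (Fin.rev_strictAnti hij).not_gt hlt⟩,
    fun _ ⟨ht, h12⟩ => eq_rev_of_strictAnti (strictAnti_of_not_containsM12 ht.1.1.1 h12)⟩

/-- The fallback value `i` is never taken when `μ` contains the staircase. -/
def greedyTransv (μ : Fin n → ℕ) (i : Fin n) : Fin n :=
  let free : Finset (Fin n) :=
    ({c : Fin n | c < μ i} : Finset _) \ (Ioi i).attach.image fun j => greedyTransv μ j.1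
  if h : free.Nonempty then free.max' h else i
termination_by n - i.val
decreasing_by have := Fin.lt_def.mp (mem_Ioi.mp j.2); omega

def freeCols (μ : Fin n → ℕ) (i : Fin n) : Finset (Fin n) :=
  ({c : Fin n | c < μ i} : Finset _) \ (Ioi i).attach.image fun j => greedyTransv μ j.1

theorem greedyTransv_def (i : Fin n) :
    greedyTransv μ i = if h : (freeCols μ i).Nonempty then (freeCols μ i).max' h else i := by
  rw [greedyTransv]
  rfl

theorem mem_freeCols {i c : Fin n} :
    c ∈ freeCols μ i ↔ c.val < μ i ∧ ∀ j, i < j → greedyTransv μ j ≠ c := by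
  simp [freeCols]

theorem le_greedyTransv {i c : Fin n} (hc : c ∈ freeCols μ i) : c ≤ greedyTransv μ i := by
  rw [greedyTransv_def, dif_pos ⟨c, hc⟩]
  exact le_max' _ _ hc

section staircase

variable (hstair : ∀ i : Fin n, n - i.val ≤ μ i)
include hstair

theorem freeCols_nonempty (i : Fin n) : (freeCols μ i).Nonempty := by
  have hlower : #((Ioi i).attach.image fun j => greedyTransv μ j.1) < #{c : Fin n | c < μ i} := by
    calc #((Ioi i).attach.image fun j => greedyTransv μ j.1)
        ≤ #(Ioi i) := card_image_le.trans card_attach.le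
      _ < min n (μ i) := by have := hstair i; rw [Fin.card_Ioi]; omega
      _ = #{c : Fin n | c < μ i} := Fin.card_filter_val_lt.symm
  obtain ⟨c, hc, hc'⟩ := exists_mem_notMem_of_card_lt_card hlower
  exact ⟨c, mem_sdiff.mpr ⟨hc, hc'⟩⟩

theorem greedyTransv_mem_freeCols (i : Fin n) : greedyTransv μ i ∈ freeCols μ i := by
  rw [greedyTransv_def, dif_pos (freeCols_nonempty hstair i)]
  exact max'_mem _ _

theorem greedyTransv_lt (i : Fin n) : (greedyTransv μ i).val < μ i :=
  (mem_freeCols.mp (greedyTransv_mem_freeCols hstair i)).1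

theorem greedyTransv_ne {i j : Fin n} (hij : i < j) : greedyTransv μ j ≠ greedyTransv μ i :=
  (mem_freeCols.mp (greedyTransv_mem_freeCols hstair i)).2 j hij

theorem greedyTransv_injective : Function.Injective (greedyTransv μ) := by
  intro i j hij
  by_contra hne
  rcases lt_or_gt_of_ne hne with h | h
  · exact greedyTransv_ne hstair h hij.symm
  · exact greedyTransv_ne hstair h hij

theorem greedyTransv_mem_freeCols_of_lt {i j : Fin n} (hij : i < j)
    (hμ : (greedyTransv μ i).val < μ j) : greedyTransv μ i ∈ freeCols μ j :=
  mem_freeCols.mpr ⟨hμ, fun _ hk => greedyTransv_ne hstair (hij.trans hk)⟩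

theorem greedyTransv_lt_greedyTransv {i j : Fin n} (hij : i < j) (hμ : μ i ≤ μ j) :
    greedyTransv μ i < greedyTransv μ j :=
  (le_greedyTransv (greedyTransv_mem_freeCols_of_lt hstair hij
    ((greedyTransv_lt hstair i).trans_le hμ))).lt_of_ne
    (greedyTransv_injective hstair |>.ne hij.ne)

theorem not_containsM21_greedyTransv : ¬ ContainsM21 μ (greedyTransv μ) :=
  fun ⟨_, _, hij, hji, hcorner⟩ =>
    (le_greedyTransv (greedyTransv_mem_freeCols_of_lt hstair hij hcorner)).not_gt hji

theorem validTransv_greedyTransv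
    (hA : ∀ a ∈ A, ∀ h : a + 1 < n, μ ⟨a, by omega⟩ ≤ μ ⟨a + 1, h⟩) :
    ValidTransv μ A ∅ (greedyTransv μ) :=
  ⟨⟨Finite.injective_iff_bijective.mp (greedyTransv_injective hstair), greedyTransv_lt hstair⟩,
    fun a ha h =>
      greedyTransv_lt_greedyTransv hstair (Fin.mk_lt_mk.mpr a.lt_succ_self) (hA a ha h),
    by simp⟩

theorem eq_greedyTransv_of_not_containsM21 (ht : IsTransv μ t) (h21 : ¬ ContainsM21 μ t) :
    t = greedyTransv μ := by
  funext i
  induction i using WellFoundedGT.induction with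
  | _ i ih =>
    have hfree : t i ∈ freeCols μ i :=
      mem_freeCols.mpr ⟨ht.2 i, fun j hij hj => hij.ne' (ht.1.1 ((ih j hij).trans hj))⟩
    refine (le_greedyTransv hfree).eq_of_not_lt fun hlt => h21 ?_
    obtain ⟨a, ha⟩ := ht.1.2 (greedyTransv μ i)
    have hai : a < i := by
      rcases lt_trichotomy a i with hai | rfl | hia
      · exact hai
      · exact absurd ha hlt.ne
      · exact absurd ((ih a hia).symm.trans ha) (greedyTransv_ne hstair hia)
    exact ⟨a, i, hai, ha ▸ hlt, ha ▸ greedyTransv_lt hstair i⟩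

theorem existsUnique_validTransv_not_containsM21
    (hA : ∀ a ∈ A, ∀ h : a + 1 < n, μ ⟨a, by omega⟩ ≤ μ ⟨a + 1, h⟩) :
    ∃! t : Fin n → Fin n, ValidTransv μ A ∅ t ∧ ¬ ContainsM21 μ t :=
  ⟨greedyTransv μ, ⟨validTransv_greedyTransv hstair hA, not_containsM21_greedyTransv hstair⟩,
    fun _ ⟨ht, h21⟩ => eq_greedyTransv_of_not_containsM21 hstair ht.1 h21⟩

end staircase

end

theorem stmt9 (n : ℕ) (μ : Fin n → ℕ) (A D : Finset ℕ)
    (hrows : ∀ i ∈ A ∪ D, ∃ h : i + 1 < n, μ ⟨i, by omega⟩ = μ ⟨i + 1, h⟩) :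
    (A.Nonempty → ∀ t : Fin n → Fin n, ValidTransv μ A D t → ContainsM12 t) ∧
    (D.Nonempty → ∀ t : Fin n → Fin n, ValidTransv μ A D t → ContainsM21 μ t) ∧
    ((∀ i : Fin n, n - i.val ≤ μ i) → A = ∅ →
      ∃! t : Fin n → Fin n, ValidTransv μ A D t ∧ ¬ ContainsM12 t) ∧
    ((∀ i : Fin n, n - i.val ≤ μ i) → D = ∅ →
      ∃! t : Fin n → Fin n, ValidTransv μ A D t ∧ ¬ ContainsM21 μ t) := by
  refine ⟨?_, ?_, ?_, ?_⟩
  · rintro ⟨a, ha⟩ t ht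
    obtain ⟨h, -⟩ := hrows a (mem_union_left _ ha)
    exact ht.containsM12 ha h
  · rintro ⟨d, hd⟩ t ht
    obtain ⟨h, hμ⟩ := hrows d (mem_union_right _ hd)
    exact ht.containsM21 hd h hμ.le
  · rintro hstair rfl
    exact existsUnique_validTransv_not_containsM12 hstair D
  · rintro hstair rfl
    refine existsUnique_validTransv_not_containsM21 hstair fun a ha _ => ?_
    obtain ⟨_, hμ⟩ := hrows a (mem_union_left _ ha)
    exact hμ.le
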